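/- arXiv:2009.12837 — 4 statements merged into one kernel-verified Lean document; each statement's English description precedes it below -/
import Mathlib

section
/- Let K > 0 and let h : [0,∞) → ℂ be differentiable with h'(t) = K(1 - h(t)²), |h(0)| < 1 and h(0) ≠ -1. Then there exist T > 0 and C > 0 such that |1 - h(t)| ≤ C·e^{-Kt} for all t ≥ T. -/
/-! The Riccati equation `h' = K (1 - h²)` is linearised by `y = exp (K ∫ h)`, which solves
`y'' = K² y`; consequently `1 - h t = 2 (1 - h 0) / ((1 + h 0) e^{2Kt} + (1 - h 0))`.
As the denominator is not known to be nonzero a priori, we prove the identity multiplied out: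
the defect `F = (1 - h) ((1 + h 0) e^{2Kt} + (1 - h 0)) - 2 (1 - h 0)` satisfies the linear equation
`F' = K (1 - h) F` with `F 0 = 0`, so it vanishes by Grönwall. Since `1 + h 0 ≠ 0`, the
denominator grows like `e^{2Kt}`, and `1 - h t` decays at that rate. -/

open Set Filter

theorem eq_zero_of_hasDerivAt_smul_self_of_eq_zero {𝕜 E : Type*} [NormedField 𝕜]
    [NormedAddCommGroup E] [NormedSpace ℝ E] [NormedSpace 𝕜 E] {F : ℝ → E} {a : ℝ → 𝕜}
    {t₀ : ℝ} (ha : ContinuousOn a (Ici t₀)) (hF : ∀ t ≥ t₀, HasDerivAt F (a t • F t) t)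
    (hF₀ : F t₀ = 0) : ∀ t ≥ t₀, F t = 0 := by
  intro t ht
  obtain ⟨M, hM⟩ := isCompact_Icc.exists_bound_of_continuousOn
    (ha.mono (Icc_subset_Ici_self : Icc t₀ t ⊆ Ici t₀))
  refine eq_zero_of_abs_deriv_le_mul_abs_self_of_eq_zero_right (K := M)
    (fun s hs => (hF s hs.1).continuousAt.continuousWithinAt)
    (fun s hs => (hF s hs.1).hasDerivWithinAt) hF₀ (fun s hs => ?_) t ⟨ht, le_rfl⟩
  rw [norm_smul]
  exact mul_le_mul_of_nonneg_right (hM s (Ico_subset_Icc_self hs)) (norm_nonneg _)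

theorem riccati_one_sub_mul_eq {K : ℝ} {h : ℝ → ℂ}
    (hderiv : ∀ t : ℝ, 0 ≤ t → HasDerivAt h ((K : ℂ) * (1 - h t ^ 2)) t) (t : ℝ) (ht : 0 ≤ t) :
    (1 - h t) * ((1 + h 0) * Real.exp (2 * K * t) + (1 - h 0)) = 2 * (1 - h 0) := by
  set E : ℝ → ℂ := fun t => Real.exp (2 * K * t)
  have hE : ∀ t, HasDerivAt E (2 * K * E t) t := fun t => by
    simpa [E, mul_comm] using (((hasDerivAt_id t).const_mul (2 * K)).exp).ofReal_comp
  have hF : ∀ t ≥ 0,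
      HasDerivAt (fun t => (1 - h t) * ((1 + h 0) * E t + (1 - h 0)) - 2 * (1 - h 0))
        ((K * (1 - h t)) • ((1 - h t) * ((1 + h 0) * E t + (1 - h 0)) - 2 * (1 - h 0))) t := by
    intro t ht
    refine ((((hderiv t ht).const_sub 1).mul
      (((hE t).const_mul (1 + h 0)).add_const (1 - h 0))).sub_const (2 * (1 - h 0))).congr_deriv ?_
    simp only [smul_eq_mul]
    ring
  have ha : ContinuousOn (fun t => (K : ℂ) * (1 - h t)) (Ici 0) := fun t ht => by
    have := (hderiv t ht).continuousAt
    exact ContinuousAt.continuousWithinAt (by fun_prop)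
  exact sub_eq_zero.1 <|
    eq_zero_of_hasDerivAt_smul_self_of_eq_zero ha hF (by simp [E]; ring) t ht

theorem exists_norm_le_mul_exp_neg_of_mul_exp_add_eq {w : ℝ → ℂ} {A B c : ℂ} {μ : ℝ}
    (hμ : 0 < μ) (hA : A ≠ 0) (hw : ∀ t ≥ 0, w t * (A * Real.exp (μ * t) + B) = c) :
    ∃ T > (0 : ℝ), ∃ C > (0 : ℝ), ∀ t ≥ T, ‖w t‖ ≤ C * Real.exp (-μ * t) := by
  have hA' : 0 < ‖A‖ := norm_pos_iff.2 hA
  obtain ⟨T, hT⟩ := eventually_atTop.1 <|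
    (Real.tendsto_exp_atTop.comp (tendsto_id.const_mul_atTop hμ)).eventually_ge_atTop
      (2 * ‖B‖ / ‖A‖)
  refine ⟨max T 1, by positivity, 2 * ‖c‖ / ‖A‖ + 1, by positivity, fun t ht => ?_⟩
  have ht₀ : 0 ≤ t := (zero_le_one.trans (le_max_right _ _)).trans ht
  set e := Real.exp (μ * t) with he
  have he_pos : 0 < e := Real.exp_pos _
  have hBe : 2 * ‖B‖ ≤ ‖A‖ * e := (div_le_iff₀' hA').1 (hT t ((le_max_left _ _).trans ht))
  have hden : ‖A‖ * e / 2 ≤ ‖A * e + B‖ := by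
    have := norm_sub_norm_le (A * e) (-B)
    rw [sub_neg_eq_add, norm_neg, norm_mul, Complex.norm_real, Real.norm_of_nonneg he_pos.le]
      at this
    linarith
  have key : ‖w t‖ * (‖A‖ * e / 2) ≤ ‖c‖ := by
    rw [← hw t ht₀, norm_mul]
    exact mul_le_mul_of_nonneg_left hden (norm_nonneg _)
  rw [neg_mul, Real.exp_neg, ← he, ← div_eq_mul_inv, le_div_iff₀ he_pos]
  calc ‖w t‖ * e = 2 / ‖A‖ * (‖w t‖ * (‖A‖ * e / 2)) := by field_simp
    _ ≤ 2 / ‖A‖ * ‖c‖ := by gcongr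
    _ ≤ 2 * ‖c‖ / ‖A‖ + 1 := by rw [div_mul_eq_mul_div]; linarith

theorem stmt_1_general (K : ℝ) (hK : 0 < K) (h : ℝ → ℂ)
    (hderiv : ∀ t : ℝ, 0 ≤ t → HasDerivAt h ((K : ℂ) * (1 - h t ^ 2)) t)
    (h0ne : h 0 ≠ -1) :
    ∃ T > (0 : ℝ), ∃ C > (0 : ℝ), ∀ t ≥ T,
      ‖1 - h t‖ ≤ C * Real.exp (-K * t) := by
  have hA : 1 + h 0 ≠ 0 := fun h₁ => h0ne (eq_neg_of_add_eq_zero_right h₁)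
  obtain ⟨T, hT, C, hC, hbound⟩ := exists_norm_le_mul_exp_neg_of_mul_exp_add_eq
    (by positivity : 0 < 2 * K) hA (riccati_one_sub_mul_eq hderiv)
  refine ⟨T, hT, C, hC, fun t ht => (hbound t ht).trans ?_⟩
  have ht₀ : 0 ≤ t := hT.le.trans ht
  gcongr
  nlinarith

theorem stmt_1 (K : ℝ) (hK : 0 < K) (h : ℝ → ℂ)
    (hderiv : ∀ t : ℝ, 0 ≤ t → HasDerivAt h ((K : ℂ) * (1 - h t ^ 2)) t)
    (h0lt : ‖h 0‖ < 1) (h0ne : h 0 ≠ -1) :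
    ∃ T > (0 : ℝ), ∃ C > (0 : ℝ), ∀ t ≥ T,
      ‖1 - h t‖ ≤ C * Real.exp (-K * t) :=
  stmt_1_general K hK h hderiv h0ne
end

section
/- Let μ_c be the probability measure on the unit circle ∂B ⊂ ℂ with density proportional to exp((2/c)·Re x) with respect to arclength measure. Then μ_c converges weakly (in distribution) to the Dirac measure δ₁ at the point 1 as c → 0⁺. -/
/-! Laplace's principle: the weights `exp (t cos θ)` on `[-π, π]`, normalised to mass one,
concentrate at the unique maximiser `θ = 0` of `cos` as `t → ∞`. Outside a neighbourhood of `0`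
we have `cos ≤ m`, while `m' ≤ cos` on a smaller neighbourhood `v` for some `m < m'`, so there the
normalised weight is at most `exp (t (m - m')) / |v|`, uniformly. Averages of a continuous `ψ`
against these weights therefore tend to `ψ 0`; the theorem is the case `t = 2 / c`,
`ψ θ = φ (exp (θ i))`. -/

open Real Filter Set MeasureTheory Topology

noncomputable def gibbsDensity {α : Type*} [MeasurableSpace α] (μ : Measure α) (s : Set α)
    (c : α → ℝ) (t : ℝ) (x : α) : ℝ :=
  (∫ y in s, rexp (t * c y) ∂μ)⁻¹ * rexp (t * c x)

lemma gibbsDensity_nonneg {α : Type*} [MeasurableSpace α] (μ : Measure α) (s : Set α)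
    (c : α → ℝ) (t : ℝ) (x : α) : 0 ≤ gibbsDensity μ s c t x :=
  mul_nonneg (inv_nonneg.2 (integral_nonneg fun _ => (exp_pos _).le)) (exp_pos _).le

section Laplace

variable {α : Type*} [TopologicalSpace α] {s : Set α} {c : α → ℝ} {x₀ : α}

lemma IsCompact.exists_forall_le_lt_of_unique_maximum (hs : IsCompact s) (hc : ContinuousOn c s)
    (h'c : ∀ y ∈ s, y ≠ x₀ → c y < c x₀) {u : Set α} (hu : IsOpen u) (hx₀u : x₀ ∈ u) :
    ∃ m < c x₀, ∀ x ∈ s \ u, c x ≤ m := by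
  rcases (s \ u).eq_empty_or_nonempty with h | h
  · exact ⟨c x₀ - 1, by linarith, by simp [h]⟩
  obtain ⟨x, hx, hmax⟩ := (hs.diff hu).exists_isMaxOn h (hc.mono sdiff_subset)
  exact ⟨c x, h'c x hx.1 fun hxx₀ => hx.2 (hxx₀ ▸ hx₀u), hmax⟩

variable [MeasurableSpace α] [BorelSpace α] [T2Space α] {μ : Measure α}
  [IsFiniteMeasureOnCompacts μ]

lemma IsCompact.integrableOn_exp_mul (hs : IsCompact s) (hc : ContinuousOn c s) (t : ℝ) :
    IntegrableOn (fun x => rexp (t * c x)) s μ :=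
  (Real.continuous_exp.comp_continuousOn (continuousOn_const.mul hc)).integrableOn_compact hs

lemma IsCompact.mul_exp_le_setIntegral_exp_mul (hs : IsCompact s) (hc : ContinuousOn c s)
    {v : Set α} (hv : MeasurableSet v) {m : ℝ} (hm : ∀ x ∈ v ∩ s, m ≤ c x) {t : ℝ} (ht : 0 ≤ t) :
    μ.real (v ∩ s) * rexp (t * m) ≤ ∫ x in s, rexp (t * c x) ∂μ :=
  calc μ.real (v ∩ s) * rexp (t * m) = ∫ _ in v ∩ s, rexp (t * m) ∂μ := by
        rw [setIntegral_const, smul_eq_mul]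
    _ ≤ ∫ x in v ∩ s, rexp (t * c x) ∂μ := by
        refine setIntegral_mono_on ?_ ((hs.integrableOn_exp_mul hc t).mono_set inter_subset_right)
          (hv.inter hs.measurableSet) fun x hx => ?_
        · exact integrableOn_const
            ((measure_mono inter_subset_right).trans_lt hs.measure_lt_top).ne
        · exact exp_le_exp.2 (mul_le_mul_of_nonneg_left (hm x hx) ht)
    _ ≤ ∫ x in s, rexp (t * c x) ∂μ :=
        setIntegral_mono_set (hs.integrableOn_exp_mul hc t)
          (Eventually.of_forall fun _ => (exp_pos _).le)
          (Eventually.of_forall inter_subset_right)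

lemma IsCompact.setIntegral_gibbsDensity (hs : IsCompact s) (hc : ContinuousOn c s)
    (hμs : μ s ≠ 0) (t : ℝ) : ∫ x in s, gibbsDensity μ s c t x ∂μ = 1 := by
  have : NeZero (μ.restrict s) := ⟨by simpa using hμs⟩
  simp only [gibbsDensity]
  rw [integral_const_mul,
    inv_mul_cancel₀ (integral_exp_pos (hs.integrableOn_exp_mul hc t)).ne']

lemma IsCompact.gibbsDensity_le (hs : IsCompact s) (hc : ContinuousOn c s)
    {v : Set α} (hv : MeasurableSet v) (hvs : 0 < μ.real (v ∩ s)) {m m' : ℝ}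
    (hm' : ∀ y ∈ v ∩ s, m' ≤ c y) {t : ℝ} (ht : 0 ≤ t) {x : α} (hx : c x ≤ m) :
    gibbsDensity μ s c t x ≤ (μ.real (v ∩ s))⁻¹ * rexp (t * (m - m')) := by
  have hZ := hs.mul_exp_le_setIntegral_exp_mul hc hv hm' ht (μ := μ)
  calc gibbsDensity μ s c t x ≤ (μ.real (v ∩ s) * rexp (t * m'))⁻¹ * rexp (t * m) := by
        unfold gibbsDensity
        gcongr
    _ = (μ.real (v ∩ s))⁻¹ * rexp (t * (m - m')) := by
        rw [mul_sub, Real.exp_sub, mul_inv, div_eq_mul_inv]; ring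

lemma IsCompact.tendstoUniformlyOn_gibbsDensity (hs : IsCompact s)
    (hμ : ∀ u, IsOpen u → x₀ ∈ u → 0 < μ (u ∩ s)) (hc : ContinuousOn c s)
    (h'c : ∀ y ∈ s, y ≠ x₀ → c y < c x₀) (h₀ : x₀ ∈ s) {u : Set α} (hu : IsOpen u)
    (hx₀u : x₀ ∈ u) : TendstoUniformlyOn (gibbsDensity μ s c) 0 atTop (s \ u) := by
  obtain ⟨m, hm, hcm⟩ := hs.exists_forall_le_lt_of_unique_maximum hc h'c hu hx₀u
  obtain ⟨m', hmm', hm'⟩ := exists_between hm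
  obtain ⟨v, hv, hx₀v, hvc⟩ : ∃ v, IsOpen v ∧ x₀ ∈ v ∧ v ∩ s ⊆ c ⁻¹' Ioi m' :=
    _root_.continuousOn_iff.1 hc x₀ h₀ (Ioi m') isOpen_Ioi hm'
  have hvs : 0 < μ.real (v ∩ s) :=
    ENNReal.toReal_pos (hμ v hv hx₀v).ne'
      ((measure_mono inter_subset_right).trans_lt hs.measure_lt_top).ne
  have hdecay : Tendsto (fun t => (μ.real (v ∩ s))⁻¹ * rexp (t * (m - m'))) atTop (𝓝 0) := by
    simpa using (tendsto_exp_atBot.comp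
      (tendsto_id.atTop_mul_const_of_neg (sub_neg.2 hmm'))).const_mul (μ.real (v ∩ s))⁻¹
  refine Metric.tendstoUniformlyOn_iff.2 fun ε hε => ?_
  filter_upwards [(tendsto_order.1 hdecay).2 ε hε, eventually_ge_atTop 0] with t hε ht x hx
  rw [Pi.zero_apply, dist_zero_left, Real.norm_of_nonneg (gibbsDensity_nonneg μ s c t x)]
  exact (hs.gibbsDensity_le hc hv.measurableSet hvs (fun y hy => (hvc hy).le) ht
    (hcm x hx)).trans_lt hε

theorem IsCompact.tendsto_setIntegral_exp_mul_smul_of_unique_maximum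
    {E : Type*} [NormedAddCommGroup E] [NormedSpace ℝ E] [CompleteSpace E] {g : α → E}
    (hs : IsCompact s)
    (hμ : ∀ u, IsOpen u → x₀ ∈ u → 0 < μ (u ∩ s)) (hc : ContinuousOn c s)
    (h'c : ∀ y ∈ s, y ≠ x₀ → c y < c x₀) (h₀ : x₀ ∈ s) (hmg : IntegrableOn g s μ)
    (hcg : ContinuousWithinAt g s x₀) :
    Tendsto (fun t : ℝ => (∫ x in s, rexp (t * c x) ∂μ)⁻¹ • ∫ x in s, rexp (t * c x) • g x ∂μ)
      atTop (𝓝 (g x₀)) := by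
  have hμs : μ s ≠ 0 := by simpa using (hμ univ isOpen_univ trivial).ne'
  have := tendsto_setIntegral_peak_smul_of_integrableOn_of_tendsto hs.measurableSet
    hs.measurableSet Subset.rfl self_mem_nhdsWithin hs.measure_lt_top.ne
    (Eventually.of_forall fun t x _ => gibbsDensity_nonneg μ s c t x)
    (fun u hu hx₀u => hs.tendstoUniformlyOn_gibbsDensity hμ hc h'c h₀ hu hx₀u)
    (tendsto_const_nhds.congr fun t => (hs.setIntegral_gibbsDensity hc hμs t).symm)
    (Eventually.of_forall fun t =>
      ((hs.integrableOn_exp_mul hc t).const_mul _).aestronglyMeasurable)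
    hmg hcg
  refine this.congr fun t => ?_
  simp_rw [gibbsDensity, ← smul_smul, integral_smul]

end Laplace

lemma Real.cos_lt_one_of_mem_Icc {θ : ℝ} (hθ : θ ∈ Icc (-π) π) (hθ₀ : θ ≠ 0) : cos θ < 1 :=
  (cos_le_one θ).lt_of_ne fun h =>
    hθ₀ ((cos_eq_one_iff_of_lt_of_lt (by linarith [hθ.1, pi_pos]) (by linarith [hθ.2, pi_pos])).1 h)

theorem stmt_9
    (Γ : ℝ → ℝ) (hΓ : ∀ c : ℝ, Γ c = ∫ θ in (-π)..π, Real.exp ((2 / c) * Real.cos θ)) :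
    ∀ φ : ℂ → ℝ, Continuous φ → (∃ M : ℝ, ∀ x : ℂ, |φ x| ≤ M) →
      Tendsto
        (fun c : ℝ =>
          (∫ θ in (-π)..π, φ (Complex.exp (θ * Complex.I)) *
            Real.exp ((2 / c) * Real.cos θ)) / Γ c)
        (nhdsWithin 0 (Ioi 0)) (nhds (φ 1)) := by
  intro φ hφ _
  have hψ : Continuous fun θ : ℝ => φ (Complex.exp (θ * Complex.I)) := by fun_prop
  have hμ : ∀ u, IsOpen u → (0 : ℝ) ∈ u → 0 < volume (u ∩ Icc (-π) π) := fun u hu h₀ =>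
    ((hu.inter isOpen_Ioo).measure_pos volume ⟨0, h₀, neg_neg_iff_pos.2 pi_pos, pi_pos⟩).trans_le
      (measure_mono (inter_subset_inter_right _ Ioo_subset_Icc_self))
  have hlaplace := isCompact_Icc.tendsto_setIntegral_exp_mul_smul_of_unique_maximum hμ
    continuous_cos.continuousOn (fun θ hθ hθ₀ => by simpa using cos_lt_one_of_mem_Icc hθ hθ₀)
    ⟨neg_nonpos.2 pi_pos.le, pi_pos.le⟩ hψ.integrableOn_Icc hψ.continuousWithinAt
  have h2c : Tendsto (fun c : ℝ => 2 / c) (𝓝[>] 0) atTop := by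
    simpa [div_eq_mul_inv] using tendsto_inv_nhdsGT_zero.const_mul_atTop two_pos
  simp only [Complex.ofReal_zero, zero_mul, Complex.exp_zero] at hlaplace
  refine (hlaplace.comp h2c).congr fun c => ?_
  simp [hΓ, intervalIntegral.integral_of_le (neg_le_self pi_pos.le),
    integral_Icc_eq_integral_Ioc, div_eq_inv_mul, mul_comm]
end

section
/- Let μ_c be the probability measure on [-π, π] with density exp((2/c)cos θ)/Γ_c. For every open neighborhood U of 0 in [-π, π], μ_c(Uᶜ) → 0 as c → 0⁺. -/
open Real Filter Set
open MeasureTheory Topology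

/-!
Outside a neighbourhood of `0` in `[-π, π]` the potential `cos` stays below some `cos δ`, while on
`[-δ/2, δ/2]` it stays above `cos (δ/2) > cos δ`. Hence the mass of `exp (τ cos)` outside the
neighbourhood, relative to its total mass, is at most a constant times
`exp (-τ (cos (δ/2) - cos δ))`, which vanishes as `τ = 2/c → ∞`.
-/

section Laplace

variable {α : Type*} [MeasurableSpace α] {μ : Measure α} {φ : α → ℝ} {s t u : Set α} {a b τ : ℝ}

theorem setIntegral_exp_mul_div_le (hτ : 0 ≤ τ) (hs : μ s < ⊤) (hφs : ∀ x ∈ s, φ x ≤ a)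
    (ht : MeasurableSet t) (ht₀ : μ t ≠ 0) (ht_top : μ t ≠ ⊤) (hφt : ∀ x ∈ t, b ≤ φ x)
    (htu : t ⊆ u) (hint : IntegrableOn (fun x => exp (τ * φ x)) u μ) :
    (∫ x in s, exp (τ * φ x) ∂μ) / ∫ x in u, exp (τ * φ x) ∂μ ≤
      μ.real s / μ.real t * exp (-(τ * (b - a))) := by
  have hnum : ∫ x in s, exp (τ * φ x) ∂μ ≤ exp (τ * a) * μ.real s := by
    refine (Real.le_norm_self _).trans (norm_setIntegral_le_of_norm_le_const hs fun x hx => ?_)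
    rw [norm_of_nonneg (exp_pos _).le]
    exact exp_le_exp.2 (mul_le_mul_of_nonneg_left (hφs x hx) hτ)
  have hden : exp (τ * b) * μ.real t ≤ ∫ x in u, exp (τ * φ x) ∂μ :=
    calc exp (τ * b) * μ.real t ≤ ∫ x in t, exp (τ * φ x) ∂μ :=
          setIntegral_ge_of_const_le_real ht ht_top
            (fun x hx => exp_le_exp.2 (mul_le_mul_of_nonneg_left (hφt x hx) hτ))
            (hint.mono_set htu)
      _ ≤ ∫ x in u, exp (τ * φ x) ∂μ :=
          setIntegral_mono_set hint (.of_forall fun _ => (exp_pos _).le) htu.eventuallyLE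
  have hμt : 0 < μ.real t := ENNReal.toReal_pos ht₀ ht_top
  calc (∫ x in s, exp (τ * φ x) ∂μ) / ∫ x in u, exp (τ * φ x) ∂μ
      ≤ exp (τ * a) * μ.real s / (exp (τ * b) * μ.real t) :=
        div_le_div₀ (by positivity) hnum (by positivity) hden
    _ = μ.real s / μ.real t * exp (-(τ * (b - a))) := by
        rw [mul_sub, neg_sub, exp_sub]
        field_simp

theorem tendsto_setIntegral_exp_mul_div_atTop (hab : a < b) (hs : μ s < ⊤)
    (hφs : ∀ x ∈ s, φ x ≤ a) (ht : MeasurableSet t) (ht₀ : μ t ≠ 0) (ht_top : μ t ≠ ⊤)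
    (hφt : ∀ x ∈ t, b ≤ φ x) (htu : t ⊆ u)
    (hint : ∀ τ, IntegrableOn (fun x => exp (τ * φ x)) u μ) :
    Tendsto (fun τ => (∫ x in s, exp (τ * φ x) ∂μ) / ∫ x in u, exp (τ * φ x) ∂μ)
      atTop (𝓝 0) := by
  have hdecay : Tendsto (fun τ => μ.real s / μ.real t * exp (-(τ * (b - a)))) atTop (𝓝 0) := by
    simpa using (tendsto_exp_neg_atTop_nhds_zero.comp
      (tendsto_id.atTop_mul_const (sub_pos.2 hab))).const_mul (μ.real s / μ.real t)
  refine squeeze_zero' (.of_forall fun τ => div_nonneg ?_ ?_) ?_ hdecay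
  · exact integral_nonneg fun _ => (exp_pos _).le
  · exact integral_nonneg fun _ => (exp_pos _).le
  · filter_upwards [eventually_ge_atTop 0] with τ hτ
    exact setIntegral_exp_mul_div_le hτ hs hφs ht ht₀ ht_top hφt htu (hint τ)

end Laplace

theorem cos_le_cos_of_le_abs {δ θ : ℝ} (hδ : 0 ≤ δ) (hδθ : δ ≤ |θ|) (hθ : |θ| ≤ π) :
    cos θ ≤ cos δ := by
  simpa only [cos_abs] using cos_le_cos_of_nonneg_of_le_pi hδ hθ hδθ

theorem exists_cos_le_of_mem_nhds_zero {V : Set ℝ} (hV : V ∈ 𝓝 0) :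
    ∃ δ, 0 < δ ∧ δ ≤ π ∧ ∀ θ ∈ Icc (-π) π \ V, cos θ ≤ cos δ := by
  obtain ⟨ε, hε, hball⟩ := Metric.mem_nhds_iff.1 hV
  refine ⟨min ε π, lt_min hε pi_pos, min_le_right _ _, fun θ ⟨hθπ, hθV⟩ => ?_⟩
  have hεθ : ε ≤ |θ| := by
    contrapose! hθV
    exact hball (by simpa [Real.dist_eq] using hθV)
  exact cos_le_cos_of_le_abs (lt_min hε pi_pos).le ((min_le_left _ _).trans hεθ) (abs_le.2 hθπ)

theorem stmt_10
    (Γ : ℝ → ℝ) (hΓ : ∀ c : ℝ, Γ c = ∫ θ in Icc (-π) π, Real.exp ((2 / c) * Real.cos θ))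
    (U : Set ℝ) (hU : ∃ V : Set ℝ, IsOpen V ∧ U = V ∩ Icc (-π) π) (h0U : (0 : ℝ) ∈ U) :
    Tendsto
      (fun c : ℝ =>
        (∫ θ in Icc (-π) π \ U, Real.exp ((2 / c) * Real.cos θ)) / Γ c)
      (nhdsWithin 0 (Ioi 0)) (nhds 0) := by
  obtain ⟨V, hV, rfl⟩ := hU
  obtain ⟨δ, hδ, hδπ, hcos⟩ := exists_cos_le_of_mem_nhds_zero (hV.mem_nhds h0U.1)
  have hinv : Tendsto (fun c : ℝ => 2 / c) (𝓝[>] 0) atTop :=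
    tendsto_inv_nhdsGT_zero.const_mul_atTop two_pos
  have hcentre : ∀ θ ∈ Icc (-(δ / 2)) (δ / 2), cos (δ / 2) ≤ cos θ := fun θ hθ => by
    simpa only [cos_abs] using cos_le_cos_of_nonneg_of_le_pi (abs_nonneg θ) (by linarith)
      (abs_le.2 hθ)
  simp only [hΓ, sdiff_inter_self_eq_sdiff]
  refine (tendsto_setIntegral_exp_mul_div_atTop (u := Icc (-π) π)
    (cos_lt_cos_of_nonneg_of_le_pi (by linarith) hδπ (by linarith))
    ((measure_mono sdiff_subset).trans_lt measure_Icc_lt_top) hcos measurableSet_Icc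
    ?_ measure_Icc_lt_top.ne hcentre (Icc_subset_Icc (by linarith) (by linarith))
    fun τ => (by fun_prop : Continuous fun θ => exp (τ * cos θ)).integrableOn_Icc).comp hinv
  simp [Real.volume_Icc, hδ]
end

section
/- Let K > 0 and let h, g : [0,∞) → ℂ be C¹ functions with h(t), g(t) in the closed unit ball, satisfying the coupled difference identity |h(t) - g(t)|² = |h(0) - g(0)|²·exp(-2K∫₀ᵗ Re(h(s) + g(s)) ds), together with |h(t)|² = (|h(0)|² - 1)·exp(-2K∫₀ᵗ Re h(s) ds) + 1 with |h(0)| < 1. If ∫₀ᵗ Re g(s) ds → +∞ as t → ∞, then |h(t) - g(t)| → 0 as t → ∞. -/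
/-!
The modulus identity gives `exp (-2K ∫₀ᵗ Re h) = (1 - |h t|²) / (1 - |h 0|²) ≤ 1 / (1 - |h 0|²)`.
Splitting `Re (h + g)` in the difference identity therefore yields
`|h t - g t|² ≤ |h 0 - g 0|² / (1 - |h 0|²) · exp (-2K ∫₀ᵗ Re g)`, and the right-hand side
tends to `0` because `∫₀ᵗ Re g → ∞`.
-/

open Filter Topology

lemma le_inv_one_sub_of_eq_sub_one_mul_add_one {a e x : ℝ} (hx : 0 ≤ x) (ha : a < 1)
    (h : x = (a - 1) * e + 1) : e ≤ (1 - a)⁻¹ := by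
  rw [← one_div, le_div_iff₀ (by linarith)]
  nlinarith

lemma intervalIntegral.integral_re_add {f g : ℝ → ℂ} {a b : ℝ}
    (hf : IntervalIntegrable f MeasureTheory.volume a b)
    (hg : IntervalIntegrable g MeasureTheory.volume a b) :
    ∫ s in a..b, (f s + g s).re = (∫ s in a..b, (f s).re) + ∫ s in a..b, (g s).re := by
  simp only [Complex.add_re]
  exact intervalIntegral.integral_add ⟨hf.1.re, hf.2.re⟩ ⟨hg.1.re, hg.2.re⟩

lemma tendsto_const_mul_exp_mul_nhds_zero {α : Type*} {l : Filter α} {I : α → ℝ}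
    (hI : Tendsto I l atTop) (C : ℝ) {c : ℝ} (hc : c < 0) :
    Tendsto (fun x => C * Real.exp (c * I x)) l (𝓝 0) := by
  have := Real.tendsto_exp_atBot.comp (hI.const_mul_atTop_of_neg hc)
  simpa using this.const_mul C

theorem stmt_16_general (K : ℝ) (hK : 0 < K) (h g : ℝ → ℂ)
    (hC1 : ContDiff ℝ 1 h) (gC1 : ContDiff ℝ 1 g)
    (hdiff : ∀ t : ℝ, 0 ≤ t →
      ‖h t - g t‖ ^ 2 =
        ‖h 0 - g 0‖ ^ 2 *
          Real.exp (-2 * K * ∫ s in (0 : ℝ)..t, (h s + g s).re))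
    (hmod : ∀ t : ℝ, 0 ≤ t →
      ‖h t‖ ^ 2 =
        (‖h 0‖ ^ 2 - 1) *
          Real.exp (-2 * K * ∫ s in (0 : ℝ)..t, (h s).re) + 1)
    (h0 : ‖h 0‖ < 1)
    (hint : Tendsto (fun t : ℝ => ∫ s in (0 : ℝ)..t, (g s).re) atTop atTop) :
    Tendsto (fun t : ℝ => ‖h t - g t‖) atTop (nhds 0) := by
  have h0sq : ‖h 0‖ ^ 2 < 1 := pow_lt_one₀ (norm_nonneg _) h0 two_ne_zero
  have hbound : ∀ t : ℝ, 0 ≤ t → ‖h t - g t‖ ^ 2 ≤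
      ‖h 0 - g 0‖ ^ 2 * (1 - ‖h 0‖ ^ 2)⁻¹ *
        Real.exp (-2 * K * ∫ s in (0 : ℝ)..t, (g s).re) := by
    intro t ht
    have hexp := le_inv_one_sub_of_eq_sub_one_mul_add_one (sq_nonneg _) h0sq (hmod t ht)
    rw [hdiff t ht, intervalIntegral.integral_re_add (hC1.continuous.intervalIntegrable 0 t)
      (gC1.continuous.intervalIntegrable 0 t), mul_add, Real.exp_add, ← mul_assoc]
    gcongr
  have hsq : Tendsto (fun t : ℝ => ‖h t - g t‖ ^ 2) atTop (𝓝 0) :=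
    squeeze_zero' (Eventually.of_forall fun t => sq_nonneg _)
      (eventually_ge_atTop 0 |>.mono hbound)
      (tendsto_const_mul_exp_mul_nhds_zero hint _ (by linarith))
  simpa using hsq.sqrt

theorem stmt_16 (K : ℝ) (hK : 0 < K) (h g : ℝ → ℂ)
    (hC1 : ContDiff ℝ 1 h) (gC1 : ContDiff ℝ 1 g)
    (hball : ∀ t : ℝ, 0 ≤ t → ‖h t‖ ≤ 1)
    (gball : ∀ t : ℝ, 0 ≤ t → ‖g t‖ ≤ 1)
    (hdiff : ∀ t : ℝ, 0 ≤ t →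
      ‖h t - g t‖ ^ 2 =
        ‖h 0 - g 0‖ ^ 2 *
          Real.exp (-2 * K * ∫ s in (0 : ℝ)..t, (h s + g s).re))
    (hmod : ∀ t : ℝ, 0 ≤ t →
      ‖h t‖ ^ 2 =
        (‖h 0‖ ^ 2 - 1) *
          Real.exp (-2 * K * ∫ s in (0 : ℝ)..t, (h s).re) + 1)
    (h0 : ‖h 0‖ < 1)
    (hint : Tendsto (fun t : ℝ => ∫ s in (0 : ℝ)..t, (g s).re) atTop atTop) :
    Tendsto (fun t : ℝ => ‖h t - g t‖) atTop (nhds 0) :=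
  stmt_16_general K hK h g hC1 gC1 hdiff hmod h0 hint
end
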